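/- For every integer k ≥ 0, the space of R^3-valued polynomial vector fields of degree at most k decomposes as the direct sum of grad(P_{k+1}) and x ∧ (P_{k-1})^3, the space of fields of the form x ∧ q with q an R^3-valued polynomial of degree at most k−1. -/

import Mathlib

open MvPolynomial

/-- `degLE p k` means `p ∈ P_k` where `k : ℤ` and `P_{-1} = {0}`. -/
def degLE3 (p : MvPolynomial (Fin 3) ℝ) (k : ℤ) : Prop :=
  p = 0 ∨ (p.totalDegree : ℤ) ≤ k

/-- gradient of a trivariate polynomial -/
noncomputable def pgrad3 (φ : MvPolynomial (Fin 3) ℝ) : Fin 3 → MvPolynomial (Fin 3) ℝ :=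
  fun i => pderiv i φ

/-- the field `x ∧ q` (cross product with the position vector) -/
noncomputable def xwedge3 (q : Fin 3 → MvPolynomial (Fin 3) ℝ) : Fin 3 → MvPolynomial (Fin 3) ℝ :=
  ![X 1 * q 2 - X 2 * q 1, X 2 * q 0 - X 0 * q 2, X 0 * q 1 - X 1 * q 0]

namespace DecompAux

abbrev P3 := MvPolynomial (Fin 3) ℝ

lemma deg3 (s : Fin 3 →₀ ℕ) : s.degree = s 0 + s 1 + s 2 := by
  show ∑ i ∈ s.support, s i = _
  rw [Finset.sum_subset (Finset.subset_univ _)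
    (by intro i _ hi; simpa using Finsupp.notMem_support_iff.mp hi)]
  simp [Fin.sum_univ_three]

lemma euler_mono (i : Fin 3) (s : Fin 3 →₀ ℕ) (a : ℝ) :
    X i * pderiv i (monomial s a) = C (s i : ℝ) * (monomial s a : P3) := by
  rw [pderiv_monomial]
  rcases Nat.eq_zero_or_pos (s i) with h | h
  · simp [h]
  · have hs : Finsupp.single i 1 + (s - Finsupp.single i 1) = s := by
      ext j
      by_cases hj : j = i
      · subst hj
        simp only [Finsupp.add_apply, Finsupp.tsub_apply, Finsupp.single_eq_same]
        omega
      · simp [Finsupp.single_apply, Ne.symm hj, hj]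
    rw [X, monomial_mul, C_mul_monomial, hs]
    congr 1
    ring

lemma euler_hom {m : ℕ} {p : P3} (hp : p.IsHomogeneous m) :
    X 0 * pderiv 0 p + X 1 * pderiv 1 p + X 2 * pderiv 2 p = C (m : ℝ) * p := by
  conv_lhs => rw [p.as_sum]
  conv_rhs => rw [p.as_sum]
  rw [map_sum (pderiv 0), map_sum (pderiv 1), map_sum (pderiv 2),
    Finset.mul_sum, Finset.mul_sum, Finset.mul_sum, Finset.mul_sum,
    ← Finset.sum_add_distrib, ← Finset.sum_add_distrib]
  refine Finset.sum_congr rfl fun s hs => ?_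
  rw [euler_mono, euler_mono, euler_mono, ← add_mul, ← add_mul, ← map_add, ← map_add]
  have hdeg : s.degree = m := by
    by_contra h
    exact mem_support_iff.mp hs (hp.coeff_eq_zero h)
  rw [deg3] at hdeg
  have : ((s 0 : ℝ) + s 1 + s 2) = (m : ℝ) := by exact_mod_cast congrArg (Nat.cast : ℕ → ℝ) hdeg
  rw [this]

lemma pderiv_isHom {m : ℕ} {p : P3} (hp : p.IsHomogeneous m) (i : Fin 3) :
    (pderiv i p).IsHomogeneous (m - 1) := by
  rw [p.as_sum, map_sum]
  apply MvPolynomial.IsHomogeneous.sum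
  intro s hs
  rw [pderiv_monomial]
  rcases Nat.eq_zero_or_pos (s i) with h | h
  · rw [h]; norm_num; exact isHomogeneous_zero _ _ _
  · apply isHomogeneous_monomial
    have hdeg : s.degree = m := by
      by_contra h
      exact mem_support_iff.mp hs (hp.coeff_eq_zero h)
    rw [deg3] at hdeg ⊢
    have hi : i = 0 ∨ i = 1 ∨ i = 2 := by fin_cases i <;> simp
    rcases hi with rfl | rfl | rfl <;>
      · simp [Finsupp.tsub_apply, Finsupp.single_apply, Fin.ext_iff]; omega

lemma sum_hc_ge (p : P3) (N : ℕ) (h : p.totalDegree ≤ N) :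
    ∑ m ∈ Finset.range (N + 1), homogeneousComponent m p = p := by
  conv_rhs => rw [← sum_homogeneousComponent p]
  exact (Finset.sum_subset (Finset.range_subset_range.mpr (by omega : p.totalDegree + 1 ≤ N + 1))
    fun m _ hm => homogeneousComponent_eq_zero m p (by simp at hm ⊢; omega)).symm

lemma euler_zero {ψ : P3}
    (h : X 0 * pderiv 0 ψ + X 1 * pderiv 1 ψ + X 2 * pderiv 2 ψ = 0) (i : Fin 3) :
    pderiv i ψ = 0 := by
  set N := ψ.totalDegree with hN
  have hsum : ∑ m ∈ Finset.range (N + 1), homogeneousComponent m ψ = ψ :=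
    sum_hc_ge ψ N le_rfl
  have hE : ∑ m ∈ Finset.range (N + 1), C (m : ℝ) * homogeneousComponent m ψ = 0 := by
    rw [← h]
    conv_rhs => rw [← hsum]
    rw [map_sum (pderiv 0), map_sum (pderiv 1), map_sum (pderiv 2),
      Finset.mul_sum, Finset.mul_sum, Finset.mul_sum,
      ← Finset.sum_add_distrib, ← Finset.sum_add_distrib]
    exact Finset.sum_congr rfl fun m _ =>
      (euler_hom (homogeneousComponent_isHomogeneous m ψ)).symm
  have hc0 : ∀ n, n ∈ Finset.range (N + 1) → n ≠ 0 → homogeneousComponent n ψ = 0 := by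
    intro n hn hn0
    have := congrArg (homogeneousComponent n) hE
    rw [map_sum, map_zero] at this
    have heq : ∀ m ∈ Finset.range (N + 1),
        homogeneousComponent n (C (m : ℝ) * homogeneousComponent m ψ) =
        if n = m then C (m : ℝ) * homogeneousComponent m ψ else 0 := by
      intro m _
      rw [homogeneousComponent_C_mul,
        homogeneousComponent_of_mem (homogeneousComponent_isHomogeneous m ψ)]
      split <;> simp
    rw [Finset.sum_congr rfl heq, Finset.sum_ite_eq (Finset.range (N+1)) n _] at this
    rw [if_pos hn] at this
    rcases mul_eq_zero.mp this with hC | h0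
    · exact absurd (by exact_mod_cast MvPolynomial.C_injective _ _ (hC.trans (map_zero C).symm))
        (by exact_mod_cast hn0)
    · exact h0
  rw [← hsum, map_sum]
  apply Finset.sum_eq_zero
  intro m hm
  rcases Nat.eq_zero_or_pos m with rfl | hmpos
  · rw [homogeneousComponent_zero]; exact pderiv_C
  · rw [hc0 m hm (by omega), map_zero]

lemma qdeg (k : ℕ) (c : ℕ → P3) (hc : ∀ m, (c m).IsHomogeneous (m - 1)) (hc0 : c 0 = 0) :
    degLE3 (∑ m ∈ Finset.range (k + 1), -(C (((m : ℝ) + 1)⁻¹) * c m)) ((k : ℤ) - 1) := by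
  rcases Nat.eq_zero_or_pos k with rfl | hk
  · left
    simp [Finset.range_one, hc0]
  · right
    have hnat : (∑ m ∈ Finset.range (k + 1), -(C (((m : ℝ) + 1)⁻¹) * c m)).totalDegree ≤ k - 1 := by
      refine (totalDegree_finset_sum _ _).trans (Finset.sup_le fun m hm => ?_)
      have hm' : m ≤ k := by
        have := Finset.mem_range.mp hm; omega
      rw [totalDegree_neg]
      refine (totalDegree_mul _ _).trans ?_
      rw [totalDegree_C]
      have := (hc m).totalDegree_le
      omega
    omega

end DecompAux

open DecompAux Finset

/-- `(P_k)³ = grad(P_{k+1}) ⊕ x ∧ (P_{k-1})³` (direct sum decomposition). -/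
theorem decomp_Pk3_grad_xwedge (k : ℕ) (v : Fin 3 → MvPolynomial (Fin 3) ℝ)
    (hv : ∀ i, (v i).totalDegree ≤ k) :
    ∃! gw : (Fin 3 → MvPolynomial (Fin 3) ℝ) × (Fin 3 → MvPolynomial (Fin 3) ℝ),
      (∃ φ : MvPolynomial (Fin 3) ℝ, φ.totalDegree ≤ k + 1 ∧ gw.1 = pgrad3 φ) ∧
      (∃ q : Fin 3 → MvPolynomial (Fin 3) ℝ, (∀ i, degLE3 (q i) ((k : ℤ) - 1)) ∧ gw.2 = xwedge3 q) ∧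
      v = gw.1 + gw.2 := by
  classical
  set a : ℕ → Fin 3 → P3 := fun m i => homogeneousComponent m (v i) with ha
  have hhom : ∀ m i, (a m i).IsHomogeneous m := fun m i =>
    homogeneousComponent_isHomogeneous m (v i)
  set S : ℕ → P3 := fun m => X 0 * a m 0 + X 1 * a m 1 + X 2 * a m 2 with hS
  set c0 : ℕ → P3 := fun m => pderiv 1 (a m 2) - pderiv 2 (a m 1) with hc0
  set c1 : ℕ → P3 := fun m => pderiv 2 (a m 0) - pderiv 0 (a m 2) with hc1
  set c2 : ℕ → P3 := fun m => pderiv 0 (a m 1) - pderiv 1 (a m 0) with hc2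
  set φ : P3 := ∑ m ∈ range (k + 1), C (((m : ℝ) + 1)⁻¹) * S m with hφ
  set q0 : P3 := ∑ m ∈ range (k + 1), -(C (((m : ℝ) + 1)⁻¹) * c0 m) with hq0
  set q1 : P3 := ∑ m ∈ range (k + 1), -(C (((m : ℝ) + 1)⁻¹) * c1 m) with hq1
  set q2 : P3 := ∑ m ∈ range (k + 1), -(C (((m : ℝ) + 1)⁻¹) * c2 m) with hq2
  have hinv : ∀ m : ℕ, (C (((m : ℝ) + 1)⁻¹) : P3) * (C (m : ℝ) + 1) = 1 := fun m => by
    rw [← C_1, ← map_add, ← map_mul, inv_mul_cancel₀ (by positivity)]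
  have hvsum : ∀ i, ∑ m ∈ range (k + 1), a m i = v i := fun i => sum_hc_ge _ _ (hv i)
  have ne10 : (1 : Fin 3) ≠ 0 := by decide
  have ne20 : (2 : Fin 3) ≠ 0 := by decide
  have ne01 : (0 : Fin 3) ≠ 1 := by decide
  have ne21 : (2 : Fin 3) ≠ 1 := by decide
  have ne02 : (0 : Fin 3) ≠ 2 := by decide
  have ne12 : (1 : Fin 3) ≠ 2 := by decide
  have key0 : ∀ m : ℕ, pderiv 0 (S m) - (X 1 * c2 m - X 2 * c1 m)
      = (C (m : ℝ) + 1) * a m 0 := by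
    intro m
    have e := euler_hom (hhom m 0)
    simp only [hS, hc1, hc2, map_add, pderiv_mul, pderiv_X_self, pderiv_X_of_ne ne10,
      pderiv_X_of_ne ne20, zero_mul]
    linear_combination e
  have key1 : ∀ m : ℕ, pderiv 1 (S m) - (X 2 * c0 m - X 0 * c2 m)
      = (C (m : ℝ) + 1) * a m 1 := by
    intro m
    have e := euler_hom (hhom m 1)
    simp only [hS, hc0, hc2, map_add, pderiv_mul, pderiv_X_self, pderiv_X_of_ne ne01,
      pderiv_X_of_ne ne21, zero_mul]
    linear_combination e
  have key2 : ∀ m : ℕ, pderiv 2 (S m) - (X 0 * c1 m - X 1 * c0 m)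
      = (C (m : ℝ) + 1) * a m 2 := by
    intro m
    have e := euler_hom (hhom m 2)
    simp only [hS, hc0, hc1, map_add, pderiv_mul, pderiv_X_self, pderiv_X_of_ne ne02,
      pderiv_X_of_ne ne12, zero_mul]
    linear_combination e
  have e0 : pderiv 0 φ + (X 1 * q2 - X 2 * q1) = v 0 := by
    rw [hφ, map_sum, hq1, hq2, Finset.mul_sum, Finset.mul_sum, ← Finset.sum_sub_distrib,
      ← Finset.sum_add_distrib, ← hvsum 0]
    refine Finset.sum_congr rfl fun m _ => ?_
    rw [pderiv_C_mul]
    linear_combination C (((m : ℝ) + 1)⁻¹) * key0 m + a m 0 * hinv m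
  have e1 : pderiv 1 φ + (X 2 * q0 - X 0 * q2) = v 1 := by
    rw [hφ, map_sum, hq0, hq2, Finset.mul_sum, Finset.mul_sum, ← Finset.sum_sub_distrib,
      ← Finset.sum_add_distrib, ← hvsum 1]
    refine Finset.sum_congr rfl fun m _ => ?_
    rw [pderiv_C_mul]
    linear_combination C (((m : ℝ) + 1)⁻¹) * key1 m + a m 1 * hinv m
  have e2 : pderiv 2 φ + (X 0 * q1 - X 1 * q0) = v 2 := by
    rw [hφ, map_sum, hq0, hq1, Finset.mul_sum, Finset.mul_sum, ← Finset.sum_sub_distrib,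
      ← Finset.sum_add_distrib, ← hvsum 2]
    refine Finset.sum_congr rfl fun m _ => ?_
    rw [pderiv_C_mul]
    linear_combination C (((m : ℝ) + 1)⁻¹) * key2 m + a m 2 * hinv m
  set q : Fin 3 → P3 := ![q0, q1, q2] with hq
  have hdecomp : v = pgrad3 φ + xwedge3 q := by
    funext i
    have hi : i = 0 ∨ i = 1 ∨ i = 2 := by fin_cases i <;> simp
    rcases hi with rfl | rfl | rfl
    · simp only [Pi.add_apply, pgrad3, xwedge3, hq, Matrix.cons_val_zero, Matrix.cons_val_one,
        Matrix.head_cons, Matrix.cons_val_two, Matrix.tail_cons]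
      exact e0.symm
    · simp only [Pi.add_apply, pgrad3, xwedge3, hq, Matrix.cons_val_zero, Matrix.cons_val_one,
        Matrix.head_cons, Matrix.cons_val_two, Matrix.tail_cons]
      exact e1.symm
    · simp only [Pi.add_apply, pgrad3, xwedge3, hq, Matrix.cons_val_zero, Matrix.cons_val_one,
        Matrix.head_cons, Matrix.cons_val_two, Matrix.tail_cons]
      exact e2.symm
  have hφdeg : φ.totalDegree ≤ k + 1 := by
    refine (totalDegree_finset_sum _ _).trans (Finset.sup_le fun m hm => ?_)
    have hm' : m ≤ k := by have := Finset.mem_range.mp hm; omega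
    refine (totalDegree_mul _ _).trans ?_
    rw [totalDegree_C]
    show 0 + (X 0 * a m 0 + X 1 * a m 1 + X 2 * a m 2).totalDegree ≤ k + 1
    have hXa : ∀ j : Fin 3, (X j * a m j).totalDegree ≤ k + 1 := fun j => by
      refine (totalDegree_mul _ _).trans ?_
      have h1 := (hhom m j).totalDegree_le
      have h2 : (X j : P3).totalDegree = 1 := totalDegree_X j
      omega
    have := (totalDegree_add (X 0 * a m 0 + X 1 * a m 1) (X 2 * a m 2)).trans
      (max_le ((totalDegree_add (X 0 * a m 0) (X 1 * a m 1)).trans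
        (max_le (hXa 0) (hXa 1))) (hXa 2))
    omega
  have hczero : ∀ j : Fin 3, pderiv j (a 0 0) = 0 ∧ pderiv j (a 0 1) = 0 ∧ pderiv j (a 0 2) = 0 := by
    intro j
    refine ⟨?_, ?_, ?_⟩ <;>
      · show pderiv j (homogeneousComponent 0 _) = 0
        rw [homogeneousComponent_zero]
        exact pderiv_C
  have hcurlhom : (∀ m, (c0 m).IsHomogeneous (m - 1)) ∧ (∀ m, (c1 m).IsHomogeneous (m - 1)) ∧
      (∀ m, (c2 m).IsHomogeneous (m - 1)) := by
    refine ⟨fun m => ?_, fun m => ?_, fun m => ?_⟩ <;>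
      exact ((pderiv_isHom (hhom m _) _).sub (pderiv_isHom (hhom m _) _))
  have hqdeg : ∀ i, degLE3 (q i) ((k : ℤ) - 1) := by
    intro i
    have hi : i = 0 ∨ i = 1 ∨ i = 2 := by fin_cases i <;> simp
    rcases hi with rfl | rfl | rfl
    · show degLE3 q0 _
      exact qdeg k c0 hcurlhom.1 (by rw [hc0]; simp [(hczero 1).2.2, (hczero 2).2.1])
    · show degLE3 q1 _
      exact qdeg k c1 hcurlhom.2.1 (by rw [hc1]; simp [(hczero 2).1, (hczero 0).2.2])
    · show degLE3 q2 _
      exact qdeg k c2 hcurlhom.2.2 (by rw [hc2]; simp [(hczero 0).2.1, (hczero 1).1])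
  refine ⟨⟨pgrad3 φ, xwedge3 q⟩, ⟨⟨φ, hφdeg, rfl⟩, ⟨q, hqdeg, rfl⟩, hdecomp⟩, ?_⟩
  rintro ⟨g, w⟩ ⟨⟨φ', hφ'd, rfl⟩, ⟨q', hq'd, rfl⟩, hv'⟩
  have heq : pgrad3 φ' + xwedge3 q' = pgrad3 φ + xwedge3 q := hv'.symm.trans hdecomp
  have hψ : ∀ i, pderiv i (φ' - φ) = (xwedge3 q) i - (xwedge3 q') i := by
    intro i
    have := congrFun heq i
    simp only [Pi.add_apply, pgrad3] at this
    rw [map_sub]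
    linear_combination this
  have E : X 0 * pderiv 0 (φ' - φ) + X 1 * pderiv 1 (φ' - φ) + X 2 * pderiv 2 (φ' - φ) = 0 := by
    rw [hψ 0, hψ 1, hψ 2]
    simp only [xwedge3, Matrix.cons_val_zero, Matrix.cons_val_one, Matrix.head_cons,
      Matrix.cons_val_two, Matrix.tail_cons]
    ring
  have hψz := euler_zero E
  have hgrad : pgrad3 φ' = pgrad3 φ := by
    funext i
    have := hψz i
    rw [map_sub] at this
    exact sub_eq_zero.mp this
  have hw : xwedge3 q' = xwedge3 q := by
    rw [hgrad] at heq
    exact add_left_cancel heq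
  exact Prod.ext hgrad hw
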